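/- Let L be a color Lie algebra, ω a scalar graded 2-cocycle, and L_ω = L ⋉ K·x the corresponding central extension. Then the generalized enveloping algebra U_ω(L) is isomorphic as a G-graded, Z-filtered algebra to the quotient U(L_ω)/⟨y−1⟩, where y is the image of the central element x in the universal enveloping algebra U(L_ω) and ⟨y−1⟩ is the two-sided ideal it generates. -/

import Mathlib

open TensorAlgebra

/-- An antisymmetric bicharacter `ε : G × G → K` on an abelian group `G`. -/
structure ColorStructure (G K : Type*) [CommGroup G] [Field K] where
  ε : G → G → K
  antisym : ∀ g h, ε g h * ε h g = 1
  mul_right : ∀ g h k, ε g (h * k) = ε g h * ε g k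
  mul_left : ∀ g h k, ε (g * h) k = ε g k * ε h k

/-- A `G`-graded `ε`-Lie algebra (color Lie algebra) structure on a `K`-vector space `V`. -/
structure ColorLieAlgebra {G K : Type*} [CommGroup G] [DecidableEq G] [Field K]
    (χ : ColorStructure G K) (V : Type*) [AddCommGroup V] [Module K V] where
  grading : G → Submodule K V
  decomp : DirectSum.IsInternal grading
  bracket : V →ₗ[K] V →ₗ[K] V
  bracket_grade : ∀ g h : G, ∀ a ∈ grading g, ∀ b ∈ grading h,
    bracket a b ∈ grading (g * h)
  bracket_antisym : ∀ g h : G, ∀ a ∈ grading g, ∀ b ∈ grading h,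
    bracket a b = -(χ.ε g h • bracket b a)
  jacobi : ∀ g h k : G, ∀ a ∈ grading g, ∀ b ∈ grading h, ∀ c ∈ grading k,
    χ.ε k g • bracket a (bracket b c) + χ.ε g h • bracket b (bracket c a)
      + χ.ε h k • bracket c (bracket a b) = 0

/-- A scalar graded 2-cocycle of degree zero on a color Lie algebra,
with values in `K` regarded as a trivial graded `L`-module. -/
structure ColorCocycle {G K : Type*} [CommGroup G] [DecidableEq G] [Field K]
    {χ : ColorStructure G K} {V : Type*} [AddCommGroup V] [Module K V]
    (L : ColorLieAlgebra χ V) where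
  ω : V →ₗ[K] V →ₗ[K] K
  antisym : ∀ g h : G, ∀ a ∈ L.grading g, ∀ b ∈ L.grading h,
    ω a b = -(χ.ε g h * ω b a)
  cocycle : ∀ g h k : G, ∀ a ∈ L.grading g, ∀ b ∈ L.grading h, ∀ c ∈ L.grading k,
    χ.ε k g * ω a (L.bracket b c) + χ.ε g h * ω b (L.bracket c a)
      + χ.ε h k * ω c (L.bracket a b) = 0
  degree_zero : ∀ g h : G, g * h ≠ 1 → ∀ a ∈ L.grading g, ∀ b ∈ L.grading h, ω a b = 0

variable {G K V : Type*} [CommGroup G] [DecidableEq G] [Field K] [AddCommGroup V] [Module K V]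
  {χ : ColorStructure G K}

/-- The defining relations of the generalized enveloping algebra `U_ω(L)`. -/
inductive URel (L : ColorLieAlgebra χ V) (c : ColorCocycle L) :
    TensorAlgebra K V → TensorAlgebra K V → Prop
  | rel {g h : G} {a b : V} (ha : a ∈ L.grading g) (hb : b ∈ L.grading h) :
      URel L c (ι K a * ι K b)
        (χ.ε g h • (ι K b * ι K a) + ι K (L.bracket a b)
          + algebraMap K (TensorAlgebra K V) (c.ω a b))

/-- The generalized enveloping algebra `U_ω(L)`: the quotient of the tensor algebra `T(L)`
by the two-sided ideal generated by the elements
`v₁ ⊗ v₂ - ε(|v₁|,|v₂|) v₂ ⊗ v₁ - [v₁,v₂] - ω(v₁,v₂)` for homogeneous `v₁, v₂`. -/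
def Uenv (L : ColorLieAlgebra χ V) (c : ColorCocycle L) : Type _ :=
  RingQuot (URel L c)

noncomputable instance (L : ColorLieAlgebra χ V) (c : ColorCocycle L) : Ring (Uenv L c) :=
  inferInstanceAs (Ring (RingQuot (URel L c)))

noncomputable instance (L : ColorLieAlgebra χ V) (c : ColorCocycle L) :
    Algebra K (Uenv L c) :=
  inferInstanceAs (Algebra K (RingQuot (URel L c)))

/-- The canonical map `i_ω : L → U_ω(L)`. -/
noncomputable def Uι (L : ColorLieAlgebra χ V) (c : ColorCocycle L) : V →ₗ[K] Uenv L c :=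
  (RingQuot.mkAlgHom K (URel L c)).toLinearMap ∘ₗ ι K

/-- The canonical positive filtration on `U_ω(L)`: `Ufil L c n` is the span of products of
at most `n` images of elements of `L` (the image of `T_n(L)`). -/
noncomputable def Ufil (L : ColorLieAlgebra χ V) (c : ColorCocycle L) (n : ℕ) :
    Submodule K (Uenv L c) :=
  Submodule.span K {u | ∃ l : List V, l.length ≤ n ∧ u = (l.map (Uι L c)).prod}

/-- `Ulow L c n` is `Ufil L c (n-1)`, with the convention `Ufil L c (-1) = ⊥`. -/
noncomputable def Ulow (L : ColorLieAlgebra χ V) (c : ColorCocycle L) :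
    ℕ → Submodule K (Uenv L c)
  | 0 => ⊥
  | n + 1 => Ufil L c n

/-- The `G`-grading of `U_ω(L)`: the `g`-component is spanned by products of images of
homogeneous elements whose degrees multiply to `g`. -/
noncomputable def Ugrading (L : ColorLieAlgebra χ V) (c : ColorCocycle L) (g : G) :
    Submodule K (Uenv L c) :=
  Submodule.span K {u | ∃ l : List (G × V), (∀ p ∈ l, p.2 ∈ L.grading p.1) ∧
    (l.map Prod.fst).prod = g ∧ u = (l.map fun p => Uι L c p.2).prod}

/-- The zero cocycle on a color Lie algebra. -/
noncomputable def zeroCocycle (L : ColorLieAlgebra χ V) : ColorCocycle L where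
  ω := 0
  antisym := by intros; simp
  cocycle := by intros; simp
  degree_zero := by intros; simp

/-!
Sending `(v, a) ∈ L_ω` to `i_ω(v) + a` respects the relations of `U(L_ω)`: scalars are central
and the scalar part of a homogeneous element vanishes outside degree `1`, where `ε` is trivial, so
the relation for `(v, a), (w, b)` reduces to `v w - ε w v = [v, w] + ω(v, w)` in `U_ω(L)`. The
resulting map kills `y - 1`. Conversely `v ↦ (v, 0)` respects the relations of `U_ω(L)` modulo
`y = 1`, because `[(v, 0), (w, 0)] = ([v, w], 0) + ω(v, w) x`. The two maps are inverse on
generators. The first sends generators of degree `g` into degree `g` and filtration degree `1`,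
and every generator `v` of `U_ω(L)` is the image of the generator `(v, 0)` of the same degree, so
the filtrations and gradings correspond.
-/
namespace ColorStructure

variable {G K : Type*} [CommGroup G] [Field K] (χ : ColorStructure G K)

theorem ε_ne_zero (g h : G) : χ.ε g h ≠ 0 :=
  left_ne_zero_of_mul_eq_one (χ.antisym g h)

theorem ε_one_left (h : G) : χ.ε 1 h = 1 := by
  have h1 : χ.ε 1 h * χ.ε 1 h = χ.ε 1 h * 1 := by rw [mul_one, ← χ.mul_left, one_mul]
  exact mul_left_cancel₀ (χ.ε_ne_zero 1 h) h1

theorem ε_one_right (g : G) : χ.ε g 1 = 1 := by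
  have h1 : χ.ε g 1 * χ.ε g 1 = χ.ε g 1 * 1 := by rw [mul_one, ← χ.mul_right, one_mul]
  exact mul_left_cancel₀ (χ.ε_ne_zero g 1) h1

end ColorStructure

namespace Uenv

variable (L : ColorLieAlgebra χ V) (c : ColorCocycle L)

theorem Uι_mul_Uι {g h : G} {a b : V} (ha : a ∈ L.grading g) (hb : b ∈ L.grading h) :
    Uι L c a * Uι L c b = χ.ε g h • (Uι L c b * Uι L c a) + Uι L c (L.bracket a b)
      + algebraMap K (Uenv L c) (c.ω a b) := by
  have h := RingQuot.mkAlgHom_rel K (URel.rel (c := c) ha hb)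
  simp only [map_add, map_mul, map_smul, AlgHom.commutes] at h
  exact h

variable {L c} {A : Type*} [Semiring A] [Algebra K A] (f : V →ₗ[K] A)
  (hf : ∀ {g h : G} {a b : V}, a ∈ L.grading g → b ∈ L.grading h →
    f a * f b = χ.ε g h • (f b * f a) + f (L.bracket a b) + algebraMap K A (c.ω a b))

noncomputable def lift : Uenv L c →ₐ[K] A :=
  RingQuot.liftAlgHom K ⟨TensorAlgebra.lift K f, by
    rintro _ _ ⟨ha, hb⟩
    simp only [map_add, map_mul, map_smul, AlgHom.commutes, TensorAlgebra.lift_ι_apply]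
    exact hf ha hb⟩

@[simp]
theorem lift_Uι (v : V) : lift f @hf (Uι L c v) = f v :=
  (RingQuot.liftAlgHom_mkAlgHom_apply K _ _ _).trans (TensorAlgebra.lift_ι_apply f v)

@[simp]
theorem zeroCocycle_ω_apply (a b : V) : (zeroCocycle L).ω a b = 0 :=
  rfl

@[ext]
theorem algHom_ext {φ ψ : Uenv L c →ₐ[K] A} (h : ∀ v, φ (Uι L c v) = ψ (Uι L c v)) :
    φ = ψ :=
  RingQuot.ringQuot_ext' K _ _ (TensorAlgebra.hom_ext (LinearMap.ext h))

end Uenv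

section Filtration

variable {L : ColorLieAlgebra χ V} {c : ColorCocycle L}

theorem Ufil_mono {m n : ℕ} (h : m ≤ n) : Ufil L c m ≤ Ufil L c n :=
  Submodule.span_mono fun _ ⟨l, hl, hu⟩ => ⟨l, hl.trans h, hu⟩

theorem Ufil_mul_le (m n : ℕ) : Ufil L c m * Ufil L c n ≤ Ufil L c (m + n) := by
  rw [Ufil, Ufil, Submodule.span_mul_span, Submodule.span_le]
  rintro _ ⟨_, ⟨l₁, h₁, rfl⟩, _, ⟨l₂, h₂, rfl⟩, rfl⟩
  exact Submodule.subset_span ⟨l₁ ++ l₂, by simp; omega, by simp⟩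

theorem algebraMap_mem_Ufil (a : K) (n : ℕ) : algebraMap K (Uenv L c) a ∈ Ufil L c n := by
  rw [Algebra.algebraMap_eq_smul_one]
  exact Submodule.smul_mem _ _ (Submodule.subset_span ⟨[], by simp, by simp⟩)

theorem Uι_mem_Ufil_one (v : V) : Uι L c v ∈ Ufil L c 1 :=
  Submodule.subset_span ⟨[v], by simp, by simp⟩

theorem list_prod_mem_Ufil {l : List (Uenv L c)} (hl : ∀ x ∈ l, x ∈ Ufil L c 1) :
    l.prod ∈ Ufil L c l.length := by
  induction l with
  | nil => simpa using algebraMap_mem_Ufil (L := L) (c := c) 1 0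
  | cons x l ih =>
    rw [List.prod_cons, List.length_cons, add_comm]
    exact Ufil_mul_le 1 _ <| Submodule.mul_mem_mul (hl x List.mem_cons_self)
      (ih fun y hy => hl y (List.mem_cons_of_mem x hy))

theorem Ugrading_mul_le (g h : G) : Ugrading L c g * Ugrading L c h ≤ Ugrading L c (g * h) := by
  rw [Ugrading, Ugrading, Submodule.span_mul_span, Submodule.span_le]
  rintro _ ⟨_, ⟨l₁, h₁, rfl, rfl⟩, _, ⟨l₂, h₂, rfl, rfl⟩, rfl⟩
  refine Submodule.subset_span ⟨l₁ ++ l₂, ?_, by simp, by simp⟩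
  intro p hp
  rcases List.mem_append.1 hp with hp | hp
  exacts [h₁ p hp, h₂ p hp]

theorem algebraMap_mem_Ugrading_one (a : K) : algebraMap K (Uenv L c) a ∈ Ugrading L c 1 := by
  rw [Algebra.algebraMap_eq_smul_one]
  exact Submodule.smul_mem _ _ (Submodule.subset_span ⟨[], by simp, by simp, by simp⟩)

theorem Uι_mem_Ugrading {g : G} {v : V} (hv : v ∈ L.grading g) : Uι L c v ∈ Ugrading L c g :=
  Submodule.subset_span ⟨[(g, v)], by simpa using hv, by simp, by simp⟩

theorem list_prod_mem_Ugrading {l : List (G × Uenv L c)}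
    (hl : ∀ p ∈ l, p.2 ∈ Ugrading L c p.1) :
    (l.map Prod.snd).prod ∈ Ugrading L c (l.map Prod.fst).prod := by
  induction l with
  | nil => simpa using algebraMap_mem_Ugrading_one (L := L) (c := c) 1
  | cons p l ih =>
    rw [List.map_cons, List.map_cons, List.prod_cons, List.prod_cons]
    exact Ugrading_mul_le _ _ <| Submodule.mul_mem_mul (hl p List.mem_cons_self)
      (ih fun q hq => hl q (List.mem_cons_of_mem p hq))

variable {V' : Type*} [AddCommGroup V'] [Module K V'] {χ' : ColorStructure G K}
  {L' : ColorLieAlgebra χ' V'} {c' : ColorCocycle L'} {φ : Uenv L c →ₐ[K] Uenv L' c'}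

theorem map_Ufil_le (hφ : ∀ v, φ (Uι L c v) ∈ Ufil L' c' 1) (n : ℕ) :
    (Ufil L c n).map φ.toLinearMap ≤ Ufil L' c' n := by
  rw [Ufil, Submodule.map_span_le]
  rintro _ ⟨l, hl, rfl⟩
  have h := list_prod_mem_Ufil (l := l.map (φ ∘ Uι L c)) (by simpa using fun v _ => hφ v)
  rw [List.length_map, ← List.map_map, ← map_list_prod] at h
  exact Ufil_mono hl h

theorem le_map_Ufil (σ : V' → V) (hσ : ∀ v, φ (Uι L c (σ v)) = Uι L' c' v) (n : ℕ) :
    Ufil L' c' n ≤ (Ufil L c n).map φ.toLinearMap := by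
  rw [Ufil, Submodule.span_le]
  rintro _ ⟨l, hl, rfl⟩
  refine ⟨((l.map σ).map (Uι L c)).prod,
    Submodule.subset_span ⟨l.map σ, by simpa using hl, rfl⟩, ?_⟩
  simp [map_list_prod, Function.comp_def, hσ]

theorem map_Ugrading_le (hφ : ∀ g, ∀ v ∈ L.grading g, φ (Uι L c v) ∈ Ugrading L' c' g)
    (g : G) :
    (Ugrading L c g).map φ.toLinearMap ≤ Ugrading L' c' g := by
  rw [Ugrading, Submodule.map_span_le]
  rintro _ ⟨l, hl, rfl, rfl⟩
  have h := list_prod_mem_Ugrading (l := l.map fun p => (p.1, φ (Uι L c p.2)))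
    fun q hq => by
      obtain ⟨p, hp, rfl⟩ := List.mem_map.1 hq
      exact hφ p.1 p.2 (hl p hp)
  simpa [map_list_prod, Function.comp_def] using h

theorem le_map_Ugrading (σ : V' → V) (hσg : ∀ g, ∀ v ∈ L'.grading g, σ v ∈ L.grading g)
    (hσ : ∀ v, φ (Uι L c (σ v)) = Uι L' c' v) (g : G) :
    Ugrading L' c' g ≤ (Ugrading L c g).map φ.toLinearMap := by
  rw [Ugrading, Submodule.span_le]
  rintro _ ⟨l, hl, rfl, rfl⟩
  refine ⟨_, Submodule.subset_span
    ⟨l.map fun p => (p.1, σ p.2), ?_, by simp [Function.comp_def], rfl⟩,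
    by simp [map_list_prod, Function.comp_def, hσ]⟩
  intro q hq
  obtain ⟨p, hp, rfl⟩ := List.mem_map.1 hq
  exact hσg p.1 p.2 (hl p hp)

end Filtration

theorem add_algebraMap_mul_add_algebraMap {R A : Type*} [CommSemiring R] [Semiring A]
    [Algebra R A] {x y z : A} (h : x * y = y * x + z) (a b : R) :
    (x + algebraMap R A a) * (y + algebraMap R A b)
      = (y + algebraMap R A b) * (x + algebraMap R A a) + z := by
  simp only [mul_add, add_mul, h]
  rw [← Algebra.commutes b x, ← Algebra.commutes a y, ← Algebra.commutes a (algebraMap R A b)]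
  abel

theorem mkAlgHom_self_eq_one {A : Type*} [Ring A] [Algebra K A] (y : A) :
    RingQuot.mkAlgHom K (fun a b : A => a = y - 1 ∧ b = 0) y = 1 := by
  have h := RingQuot.mkAlgHom_rel K (s := fun a b : A => a = y - 1 ∧ b = 0) ⟨rfl, rfl⟩
  rwa [map_sub, map_one, map_zero, sub_eq_zero] at h

theorem mkAlgHom_apply_eq_add_algebraMap {A : Type*} [Ring A] [Algebra K A]
    (f : V × K →ₗ[K] A) (p : V × K) :
    RingQuot.mkAlgHom K (fun a b : A => a = f (0, 1) - 1 ∧ b = 0) (f p)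
      = RingQuot.mkAlgHom K _ (f (p.1, 0)) + algebraMap K _ p.2 := by
  have hp : p = (p.1, 0) + p.2 • ((0 : V), (1 : K)) := by ext <;> simp
  conv_lhs => rw [hp]
  rw [map_add, map_smul, map_add, map_smul, mkAlgHom_self_eq_one, Algebra.algebraMap_eq_smul_one]

/-- `E` is the central extension `L_ω = L ⋉ K·x` of `L` by `ω`, realised on `V × K`
with `x = (0, 1)`. -/
structure IsCentralExtension (L : ColorLieAlgebra χ V) (c : ColorCocycle L)
    (E : ColorLieAlgebra χ (V × K)) : Prop where
  grading_eq : ∀ g : G, E.grading g = (L.grading g).prod (if g = 1 then ⊤ else ⊥)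
  bracket_eq : ∀ p q : V × K, E.bracket p q = (L.bracket p.1 q.1, c.ω p.1 q.1)

namespace IsCentralExtension

variable {L : ColorLieAlgebra χ V} {c : ColorCocycle L} {E : ColorLieAlgebra χ (V × K)}

theorem mem_grading (hE : IsCentralExtension L c E) {g : G} {p : V × K} (hp : p ∈ E.grading g) :
    p.1 ∈ L.grading g ∧ (g ≠ 1 → p.2 = 0) := by
  rw [hE.grading_eq, Submodule.mem_prod] at hp
  exact ⟨hp.1, fun hg => by simpa [hg] using hp.2⟩

theorem rel (hE : IsCentralExtension L c E) {g h : G} {p q : V × K} (hp : p ∈ E.grading g)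
    (hq : q ∈ E.grading h) :
    (Uι L c p.1 + algebraMap K (Uenv L c) p.2) * (Uι L c q.1 + algebraMap K (Uenv L c) q.2)
      = χ.ε g h • ((Uι L c q.1 + algebraMap K (Uenv L c) q.2)
          * (Uι L c p.1 + algebraMap K (Uenv L c) p.2))
        + (Uι L c (E.bracket p q).1 + algebraMap K (Uenv L c) (E.bracket p q).2) := by
  obtain ⟨hp₁, hp₂⟩ := hE.mem_grading hp
  obtain ⟨hq₁, hq₂⟩ := hE.mem_grading hq
  have hrel := Uenv.Uι_mul_Uι L c hp₁ hq₁
  rw [add_assoc] at hrel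
  rw [hE.bracket_eq]
  -- the scalar parts of `p` and `q` can only be nonzero in degree `1`, where `ε` is trivial
  by_cases hε : χ.ε g h = 1
  · rw [hε, one_smul] at hrel ⊢
    exact add_algebraMap_mul_add_algebraMap hrel _ _
  · have hg : g ≠ 1 := fun hg => hε (hg ▸ χ.ε_one_left h)
    have hh : h ≠ 1 := fun hh => hε (hh ▸ χ.ε_one_right g)
    simp [hp₂ hg, hq₂ hh, hrel]

noncomputable def toUenv (hE : IsCentralExtension L c E) :
    Uenv E (zeroCocycle E) →ₐ[K] Uenv L c :=
  Uenv.lift (Uι L c ∘ₗ LinearMap.fst K V K + Algebra.linearMap K _ ∘ₗ LinearMap.snd K V K)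
    fun hp hq => by simpa using hE.rel hp hq

theorem toUenv_Uι (hE : IsCentralExtension L c E) (p : V × K) :
    hE.toUenv (Uι E (zeroCocycle E) p) = Uι L c p.1 + algebraMap K (Uenv L c) p.2 := by
  simp [toUenv]

theorem inl_mem_grading (hE : IsCentralExtension L c E) {g : G} {v : V}
    (hv : v ∈ L.grading g) : (v, (0 : K)) ∈ E.grading g := by
  rw [hE.grading_eq]
  exact Submodule.mem_prod.2 ⟨hv, Submodule.zero_mem _⟩

noncomputable def quotientToUenv (hE : IsCentralExtension L c E) :
    RingQuot (fun a b : Uenv E (zeroCocycle E) => a = Uι E (zeroCocycle E) (0, 1) - 1 ∧ b = 0)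
      →ₐ[K] Uenv L c :=
  RingQuot.liftAlgHom K ⟨hE.toUenv, by rintro _ _ ⟨rfl, rfl⟩; simp [toUenv_Uι]⟩

theorem quotientToUenv_mkAlgHom (hE : IsCentralExtension L c E) (u : Uenv E (zeroCocycle E)) :
    hE.quotientToUenv (RingQuot.mkAlgHom K _ u) = hE.toUenv u :=
  RingQuot.liftAlgHom_mkAlgHom_apply K _ _ u

noncomputable def uenvToQuotient (hE : IsCentralExtension L c E) : Uenv L c →ₐ[K]
    RingQuot (fun a b : Uenv E (zeroCocycle E) => a = Uι E (zeroCocycle E) (0, 1) - 1 ∧ b = 0) :=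
  Uenv.lift
    ((RingQuot.mkAlgHom K _).toLinearMap ∘ₗ Uι E (zeroCocycle E) ∘ₗ LinearMap.inl K V K)
    fun ha hb => by
      have h := Uenv.Uι_mul_Uι E (zeroCocycle E) (hE.inl_mem_grading ha) (hE.inl_mem_grading hb)
      simp only [LinearMap.coe_comp, Function.comp_apply, LinearMap.inl_apply,
        AlgHom.toLinearMap_apply, ← map_mul]
      -- `[(a, 0), (b, 0)] = ([a, b], 0) + ω(a, b) x` and `x ↦ 1` in the quotient
      rw [h, hE.bracket_eq, Uenv.zeroCocycle_ω_apply, map_zero, add_zero, map_add,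
        map_smul, mkAlgHom_apply_eq_add_algebraMap (Uι E (zeroCocycle E)), add_assoc]

theorem uenvToQuotient_Uι (hE : IsCentralExtension L c E) (v : V) :
    hE.uenvToQuotient (Uι L c v) = RingQuot.mkAlgHom K _ (Uι E (zeroCocycle E) (v, 0)) := by
  simp [uenvToQuotient]

noncomputable def quotientEquivUenv (hE : IsCentralExtension L c E) :
    RingQuot (fun a b : Uenv E (zeroCocycle E) => a = Uι E (zeroCocycle E) (0, 1) - 1 ∧ b = 0)
      ≃ₐ[K] Uenv L c :=
  AlgEquiv.ofAlgHom hE.quotientToUenv hE.uenvToQuotient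
    (Uenv.algHom_ext fun v => by simp [uenvToQuotient_Uι, quotientToUenv_mkAlgHom, toUenv_Uι])
    (RingQuot.ringQuot_ext' K _ _ <| Uenv.algHom_ext fun p => by
      simp [uenvToQuotient_Uι, quotientToUenv_mkAlgHom, toUenv_Uι,
        mkAlgHom_apply_eq_add_algebraMap (Uι E (zeroCocycle E)) p])

theorem quotientEquivUenv_mkAlgHom (hE : IsCentralExtension L c E) (u : Uenv E (zeroCocycle E)) :
    hE.quotientEquivUenv (RingQuot.mkAlgHom K _ u) = hE.toUenv u :=
  hE.quotientToUenv_mkAlgHom u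

theorem map_quotientEquivUenv_map_mkAlgHom (hE : IsCentralExtension L c E)
    (S : Submodule K (Uenv E (zeroCocycle E))) :
    (S.map (RingQuot.mkAlgHom K _).toLinearMap).map hE.quotientEquivUenv.toLinearMap
      = S.map hE.toUenv.toLinearMap := by
  rw [← Submodule.map_comp]
  exact congrArg (S.map ·) (LinearMap.ext hE.quotientToUenv_mkAlgHom)

theorem map_toUenv_Ufil (hE : IsCentralExtension L c E) (n : ℕ) :
    (Ufil E (zeroCocycle E) n).map hE.toUenv.toLinearMap = Ufil L c n := by
  refine le_antisymm (map_Ufil_le (fun p => ?_) n)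
    (le_map_Ufil (fun v => (v, 0)) (fun v => by simp [toUenv_Uι]) n)
  rw [toUenv_Uι]
  exact add_mem (Uι_mem_Ufil_one _) (algebraMap_mem_Ufil _ _)

theorem map_toUenv_Ugrading (hE : IsCentralExtension L c E) (g : G) :
    (Ugrading E (zeroCocycle E) g).map hE.toUenv.toLinearMap = Ugrading L c g := by
  refine le_antisymm (map_Ugrading_le (fun g p hp => ?_) g)
    (le_map_Ugrading (fun v => (v, 0)) (fun _ _ => hE.inl_mem_grading)
      (fun v => by simp [toUenv_Uι]) g)
  obtain ⟨hp₁, hp₂⟩ := hE.mem_grading hp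
  rw [toUenv_Uι]
  refine add_mem (Uι_mem_Ugrading hp₁) ?_
  by_cases hg : g = 1
  · exact hg ▸ algebraMap_mem_Ugrading_one _
  · rw [hp₂ hg, map_zero]
    exact zero_mem _

end IsCentralExtension

theorem Uomega_iso_quotient_of_central_extension_general
    (L : ColorLieAlgebra χ V) (c : ColorCocycle L)
    (E : ColorLieAlgebra χ (V × K))
    (hEg : ∀ g : G, E.grading g =
      (L.grading g).prod (if g = 1 then (⊤ : Submodule K K) else ⊥))
    (hEb : ∀ p q : V × K, E.bracket p q = (L.bracket p.1 q.1, c.ω p.1 q.1)) :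
    -- `y` is the image of the central element `x = (0,1)` in `U(L_ω)`
    ∀ y : Uenv E (zeroCocycle E), y = Uι E (zeroCocycle E) ((0 : V), (1 : K)) →
    -- the quotient `U(L_ω)/⟨y-1⟩` as a `RingQuot`
    ∃ Φ : RingQuot (fun a b : Uenv E (zeroCocycle E) => a = y - 1 ∧ b = 0) ≃ₐ[K]
        Uenv L c,
      -- compatibility with the canonical maps from `L`
      (∀ (x : V) (a : K),
        Φ (RingQuot.mkAlgHom K _ (Uι E (zeroCocycle E) (x, a)))
          = Uι L c x + algebraMap K (Uenv L c) a) ∧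
      -- `Φ` respects the filtrations (images of the `U_n`)
      (∀ n : ℕ,
        Submodule.map Φ.toLinearMap
          (Submodule.map (RingQuot.mkAlgHom K
              (fun a b : Uenv E (zeroCocycle E) => a = y - 1 ∧ b = 0)).toLinearMap
            (Ufil E (zeroCocycle E) n)) = Ufil L c n) ∧
      -- `Φ` respects the `G`-gradings
      (∀ g : G,
        Submodule.map Φ.toLinearMap
          (Submodule.map (RingQuot.mkAlgHom K
              (fun a b : Uenv E (zeroCocycle E) => a = y - 1 ∧ b = 0)).toLinearMap
            (Ugrading E (zeroCocycle E) g)) = Ugrading L c g) := by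
  rintro y rfl
  have hE : IsCentralExtension L c E := ⟨hEg, hEb⟩
  refine ⟨hE.quotientEquivUenv, fun x a => ?_, fun n => ?_, fun g => ?_⟩
  · rw [hE.quotientEquivUenv_mkAlgHom, hE.toUenv_Uι]
  · rw [hE.map_quotientEquivUenv_map_mkAlgHom, hE.map_toUenv_Ufil]
  · rw [hE.map_quotientEquivUenv_map_mkAlgHom, hE.map_toUenv_Ugrading]

/-- `U_ω(L)` is isomorphic, as a `G`-graded `ℤ`-filtered algebra, to
`U(L_ω)/⟨y - 1⟩`, where `L_ω = L ⋉ K·x` is the central extension of `L` by `ω`,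
`U(L_ω)` its (ordinary) universal enveloping algebra, and `y` the image of the central
element `x` in `U(L_ω)`. -/
theorem Uomega_iso_quotient_of_central_extension [CharZero K]
    (L : ColorLieAlgebra χ V) (c : ColorCocycle L)
    (E : ColorLieAlgebra χ (V × K))
    (hEg : ∀ g : G, E.grading g =
      (L.grading g).prod (if g = 1 then (⊤ : Submodule K K) else ⊥))
    (hEb : ∀ p q : V × K, E.bracket p q = (L.bracket p.1 q.1, c.ω p.1 q.1)) :
    -- `y` is the image of the central element `x = (0,1)` in `U(L_ω)`
    ∀ y : Uenv E (zeroCocycle E), y = Uι E (zeroCocycle E) ((0 : V), (1 : K)) →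
    -- the quotient `U(L_ω)/⟨y-1⟩` as a `RingQuot`
    ∃ Φ : RingQuot (fun a b : Uenv E (zeroCocycle E) => a = y - 1 ∧ b = 0) ≃ₐ[K]
        Uenv L c,
      -- compatibility with the canonical maps from `L`
      (∀ (x : V) (a : K),
        Φ (RingQuot.mkAlgHom K _ (Uι E (zeroCocycle E) (x, a)))
          = Uι L c x + algebraMap K (Uenv L c) a) ∧
      -- `Φ` respects the filtrations (images of the `U_n`)
      (∀ n : ℕ,
        Submodule.map Φ.toLinearMap
          (Submodule.map (RingQuot.mkAlgHom K
              (fun a b : Uenv E (zeroCocycle E) => a = y - 1 ∧ b = 0)).toLinearMap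
            (Ufil E (zeroCocycle E) n)) = Ufil L c n) ∧
      -- `Φ` respects the `G`-gradings
      (∀ g : G,
        Submodule.map Φ.toLinearMap
          (Submodule.map (RingQuot.mkAlgHom K
              (fun a b : Uenv E (zeroCocycle E) => a = y - 1 ∧ b = 0)).toLinearMap
            (Ugrading E (zeroCocycle E) g)) = Ugrading L c g) :=
  Uomega_iso_quotient_of_central_extension_general L c E hEg hEb
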